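/- Let p ∈ (1,∞). The function K is continuous on (0,1), differentiable on (0,1), and satisfies K'(y) = −F_∞(y, K(y)) = −(16p + 4(3p−2)·K(y) + 2(p−1)·K(y)²) / (y·(4 + (p−1)·K(y))) for every y ∈ (0,1). -/

import Mathlib

/-!
Integrating the ODE from `1`, where `G_a` vanishes, gives `G_a y = ∫ t in y..1, F_a(t, G_a t)`.
On `[y, 1]` monotonicity gives `0 ≤ G_a ≤ G_a y`, and `G_a y` stays bounded as `a → ∞`, so the
integrands are bounded uniformly in `a ≥ 1`; they converge pointwise to `F_∞(t, K t)`, and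
dominated convergence gives `K y = ∫ t in y..1, F_∞(t, K t)`. A primitive of an integrable
function is continuous, so `K` is continuous; hence so is `t ↦ F_∞(t, K t)`, and the fundamental
theorem of calculus gives `K' = -F_∞(·, K)`.
-/

open Set Real Filter MeasureTheory

/-- `F_a(y,w)` from the paper (with parameter `p`). -/
noncomputable def Fa (p a y w : ℝ) : ℝ :=
  (8*p*(1/a + 2*y) + (2*p/a + 4*(3*p - 2)*y + 2*(p - 1)*y*w)*w) / (y^2 * (4 + (p - 1)*w))

/-- `G` is the family `a ↦ G_a` of solutions of `G_a' = -F_a(y, G_a)` on `(0,1)`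
with `G_a(1) = 0`: each `G_a` is continuous on `(0,1]`, positive on `(0,1)` and
strictly decreasing on `(0,1]`. -/
def IsGFamily (p : ℝ) (G : ℝ → ℝ → ℝ) : Prop :=
  ∀ a : ℝ, 0 < a →
    ContinuousOn (G a) (Set.Ioc 0 1) ∧
    G a 1 = 0 ∧
    (∀ y ∈ Set.Ioo (0:ℝ) 1, HasDerivAt (G a) (-(Fa p a y (G a y))) y) ∧
    (∀ y ∈ Set.Ioo (0:ℝ) 1, 0 < G a y) ∧
    StrictAntiOn (G a) (Set.Ioc 0 1)

/-- The limiting nonlinearity `F_∞(y,w)`. -/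
noncomputable def Finf (p y w : ℝ) : ℝ :=
  (16*p + 4*(3*p - 2)*w + 2*(p - 1)*w^2) / (y * (4 + (p - 1)*w))

open Topology

section Nonlinearity

variable {p a t w : ℝ}

lemma four_add_sub_one_mul_pos (hp : 1 ≤ p) (hw : 0 ≤ w) : 0 < 4 + (p - 1) * w := by
  nlinarith

lemma Fa_nonneg (hp : 1 ≤ p) (ha : 0 < a) (ht : 0 < t) (hw : 0 ≤ w) : 0 ≤ Fa p a t w := by
  have := four_add_sub_one_mul_pos hp hw
  have : 0 ≤ 3 * p - 2 := by linarith
  have : 0 ≤ p - 1 := by linarith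
  unfold Fa
  positivity

lemma Fa_le {y M : ℝ} (hp : 1 ≤ p) (ha : 1 ≤ a) (hy : 0 < y) (hyt : y ≤ t) (ht : t ≤ 1)
    (hw : 0 ≤ w) (hwM : w ≤ M) :
    Fa p a t w ≤ (24*p + (2*p + 4*(3*p - 2) + 2*(p - 1)*M)*M) / (4*y^2) := by
  have hp1 : 0 ≤ p - 1 := by linarith
  have hinv : 1/a ≤ 1 := div_le_one_of_le₀ ha (by linarith)
  have h2pa : 2*p/a ≤ 2*p := div_le_self (by positivity) ha
  have hcoef₀ : 0 ≤ 2*p/a + 4*(3*p - 2)*t + 2*(p - 1)*t*w := by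
    have : 0 ≤ 2*p/a := by positivity
    nlinarith [mul_nonneg (mul_nonneg hp1 (hy.trans_le hyt).le) hw]
  have hcoef : 2*p/a + 4*(3*p - 2)*t + 2*(p - 1)*t*w ≤ 2*p + 4*(3*p - 2) + 2*(p - 1)*M := by
    nlinarith [mul_le_mul ht hwM hw zero_le_one]
  have hnum₀ : 0 ≤ 8*p*(1/a + 2*t) + (2*p/a + 4*(3*p - 2)*t + 2*(p - 1)*t*w)*w := by
    have : 0 ≤ 1/a := by positivity
    nlinarith [mul_nonneg hcoef₀ hw]
  have hnum : 8*p*(1/a + 2*t) + (2*p/a + 4*(3*p - 2)*t + 2*(p - 1)*t*w)*w ≤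
      24*p + (2*p + 4*(3*p - 2) + 2*(p - 1)*M)*M := by
    nlinarith [mul_le_mul hcoef hwM hw (by linarith)]
  have hden : 4*y^2 ≤ t^2 * (4 + (p - 1)*w) := by
    nlinarith [pow_le_pow_left₀ hy.le hyt 2, mul_nonneg (mul_nonneg hp1 hw) (sq_nonneg t)]
  exact div_le_div₀ (hnum₀.trans hnum) hnum (by positivity) hden

lemma tendsto_Fa_atTop {w₀ : ℝ} {w : ℝ → ℝ} (ht : t ≠ 0) (hw₀ : 4 + (p - 1) * w₀ ≠ 0)
    (hw : Tendsto w atTop (𝓝 w₀)) :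
    Tendsto (fun a => Fa p a t (w a)) atTop (𝓝 (Finf p t w₀)) := by
  have hinv : ∀ c : ℝ, Tendsto (fun a : ℝ => c / a) atTop (𝓝 0) := fun c =>
    tendsto_const_nhds.div_atTop tendsto_id
  have hlim : Tendsto (fun a => Fa p a t (w a)) atTop (𝓝 ((8*p*(0 + 2*t) +
      (0 + 4*(3*p - 2)*t + 2*(p - 1)*t*w₀)*w₀) / (t^2 * (4 + (p - 1)*w₀)))) := by
    unfold Fa
    exact ((tendsto_const_nhds.mul ((hinv 1).add tendsto_const_nhds)).add
      ((((hinv (2*p)).add tendsto_const_nhds).add (tendsto_const_nhds.mul hw)).mul hw)).div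
      (tendsto_const_nhds.mul (tendsto_const_nhds.add (tendsto_const_nhds.mul hw)))
      (mul_ne_zero (pow_ne_zero 2 ht) hw₀)
  convert hlim using 2
  unfold Finf
  field_simp
  ring

lemma continuousOn_Fa_comp {g : ℝ → ℝ} {s : Set ℝ} (hp : 1 ≤ p) (hg : ContinuousOn g s)
    (hs : ∀ t ∈ s, 0 < t) (hg₀ : ∀ t ∈ s, 0 ≤ g t) :
    ContinuousOn (fun t => Fa p a t (g t)) s := by
  unfold Fa
  refine ContinuousOn.div (by fun_prop) (by fun_prop) fun t ht => ?_
  have := four_add_sub_one_mul_pos hp (hg₀ t ht)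
  have := hs t ht
  positivity

lemma continuousOn_Finf_comp {g : ℝ → ℝ} {s : Set ℝ} (hp : 1 ≤ p) (hg : ContinuousOn g s)
    (hs : ∀ t ∈ s, 0 < t) (hg₀ : ∀ t ∈ s, 0 ≤ g t) :
    ContinuousOn (fun t => Finf p t (g t)) s := by
  unfold Finf
  refine ContinuousOn.div (by fun_prop) (by fun_prop) fun t ht => ?_
  have := four_add_sub_one_mul_pos hp (hg₀ t ht)
  have := hs t ht
  positivity

end Nonlinearity

namespace IsGFamily

variable {p : ℝ} {G : ℝ → ℝ → ℝ} {a t y k : ℝ}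

lemma nonneg (hG : IsGFamily p G) (ha : 0 < a) (ht : t ∈ Ioc (0:ℝ) 1) : 0 ≤ G a t := by
  obtain ⟨-, h1, -, hpos, -⟩ := hG a ha
  rcases ht.2.lt_or_eq with ht1 | rfl
  · exact (hpos t ⟨ht.1, ht1⟩).le
  · exact h1.ge

lemma nonneg_of_tendsto (hG : IsGFamily p G) (ht : t ∈ Ioc (0:ℝ) 1)
    (hk : Tendsto (fun a => G a t) atTop (𝓝 k)) : 0 ≤ k :=
  ge_of_tendsto hk <| (eventually_gt_atTop 0).mono fun _ ha => hG.nonneg ha ht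

lemma continuousOn_Fa (hp : 1 ≤ p) (hG : IsGFamily p G) (ha : 0 < a) (hy : 0 < y) :
    ContinuousOn (fun t => Fa p a t (G a t)) (Icc y 1) :=
  have hsub : Icc y 1 ⊆ Ioc 0 1 := fun _ ht => ⟨hy.trans_le ht.1, ht.2⟩
  continuousOn_Fa_comp hp ((hG a ha).1.mono hsub) (fun _ ht => (hsub ht).1)
    fun _ ht => hG.nonneg ha (hsub ht)

lemma eq_integral_Fa (hp : 1 ≤ p) (hG : IsGFamily p G) (ha : 0 < a) (hy : y ∈ Ioc (0:ℝ) 1) :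
    G a y = ∫ t in y..1, Fa p a t (G a t) := by
  obtain ⟨hcont, h1, hderiv, -, -⟩ := hG a ha
  have hFTC := intervalIntegral.integral_eq_sub_of_hasDeriv_right_of_le hy.2
    (hcont.mono fun _ ht => ⟨hy.1.trans_le ht.1, ht.2⟩)
    (fun t ht => (hderiv t ⟨hy.1.trans ht.1, ht.2⟩).hasDerivWithinAt)
    ((hG.continuousOn_Fa hp ha hy.1).neg.intervalIntegrable_of_Icc hy.2)
  rw [intervalIntegral.integral_neg, h1] at hFTC
  linarith

lemma tendsto_Fa (hp : 1 ≤ p) (hG : IsGFamily p G) (ht : t ∈ Ioc (0:ℝ) 1)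
    (hk : Tendsto (fun a => G a t) atTop (𝓝 k)) :
    Tendsto (fun a => Fa p a t (G a t)) atTop (𝓝 (Finf p t k)) :=
  tendsto_Fa_atTop ht.1.ne' (four_add_sub_one_mul_pos hp (hG.nonneg_of_tendsto ht hk)).ne' hk

lemma eventually_abs_Fa_le (hp : 1 ≤ p) (hG : IsGFamily p G) (hy : y ∈ Ioc (0:ℝ) 1)
    (hk : Tendsto (fun a => G a y) atTop (𝓝 k)) :
    ∃ B, ∀ᶠ a in atTop, ∀ t ∈ Icc y 1, |Fa p a t (G a t)| ≤ B := by
  refine ⟨(24*p + (2*p + 4*(3*p - 2) + 2*(p - 1)*(k + 1))*(k + 1)) / (4*y^2), ?_⟩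
  filter_upwards [eventually_ge_atTop 1, hk.eventually_lt_const (lt_add_one k)]
    with a ha hGy t ht
  have ha₀ : 0 < a := by linarith
  have ht' : t ∈ Ioc (0:ℝ) 1 := ⟨hy.1.trans_le ht.1, ht.2⟩
  have hGt : G a t ≤ G a y := (hG a ha₀).2.2.2.2.antitoneOn hy ht' ht.1
  rw [abs_of_nonneg (Fa_nonneg hp ha₀ ht'.1 (hG.nonneg ha₀ ht'))]
  exact Fa_le hp ha hy.1 ht.1 ht.2 (hG.nonneg ha₀ ht') (hGt.trans hGy.le)

end IsGFamily

namespace IsGFamily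

variable {p : ℝ} {G : ℝ → ℝ → ℝ} {K : ℝ → ℝ} {y : ℝ}

lemma integrableOn_Finf (hp : 1 ≤ p) (hG : IsGFamily p G)
    (hK : ∀ t ∈ Ioc (0:ℝ) 1, Tendsto (fun a => G a t) atTop (𝓝 (K t)))
    (hy : y ∈ Ioc (0:ℝ) 1) :
    IntegrableOn (fun t => Finf p t (K t)) (Icc y 1) := by
  obtain ⟨B, hB⟩ := hG.eventually_abs_Fa_le hp hy (hK y hy)
  have hsub : Icc y 1 ⊆ Ioc 0 1 := fun _ ht => ⟨hy.1.trans_le ht.1, ht.2⟩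
  have hlim : ∀ t ∈ Icc y 1,
      Tendsto (fun a => Fa p a t (G a t)) atTop (𝓝 (Finf p t (K t))) :=
    fun t ht => hG.tendsto_Fa hp (hsub ht) (hK t (hsub ht))
  -- `G a` is only constrained for `a > 0`, so measurability passes through the sequence `a = n + 1`
  have hseq : Tendsto (fun n : ℕ => (n : ℝ) + 1) atTop atTop :=
    tendsto_atTop_add_const_right _ 1 tendsto_natCast_atTop_atTop
  have hmeas : AEStronglyMeasurable (fun t => Finf p t (K t)) (volume.restrict (Icc y 1)) :=
    aestronglyMeasurable_of_tendsto_ae atTop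
      (fun n => (hG.continuousOn_Fa hp n.cast_add_one_pos hy.1).aestronglyMeasurable
        measurableSet_Icc)
      ((ae_restrict_iff' measurableSet_Icc).2 <|
        Eventually.of_forall fun t ht => (hlim t ht).comp hseq)
  refine ⟨hmeas, .restrict_of_bounded (C := B) measure_Icc_lt_top
    ((ae_restrict_iff' measurableSet_Icc).2 <| Eventually.of_forall fun t ht => ?_)⟩
  exact le_of_tendsto (hlim t ht).abs (hB.mono fun a ha => ha t ht)

lemma eq_integral_Finf (hp : 1 ≤ p) (hG : IsGFamily p G)
    (hK : ∀ t ∈ Ioc (0:ℝ) 1, Tendsto (fun a => G a t) atTop (𝓝 (K t)))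
    (hy : y ∈ Ioc (0:ℝ) 1) :
    K y = ∫ t in y..1, Finf p t (K t) := by
  obtain ⟨B, hB⟩ := hG.eventually_abs_Fa_le hp hy (hK y hy)
  have hsub : Ioc y 1 ⊆ Ioc 0 1 := fun _ ht => ⟨hy.1.trans ht.1, ht.2⟩
  rw [← uIoc_of_le hy.2] at hsub
  refine tendsto_nhds_unique (hK y hy) <|
    (intervalIntegral.tendsto_integral_filter_of_dominated_convergence (fun _ => B)
      ?_ ?_ intervalIntegrable_const ?_).congr'
      ((eventually_gt_atTop 0).mono fun a ha => (hG.eq_integral_Fa hp ha hy).symm)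
  · filter_upwards [eventually_gt_atTop 0] with a ha
    exact ((hG.continuousOn_Fa hp ha hy.1).mono (uIoc_of_le hy.2 ▸ Ioc_subset_Icc_self))
      |>.aestronglyMeasurable measurableSet_uIoc
  · filter_upwards [hB] with a ha
    exact Eventually.of_forall fun t ht =>
      ha t (Ioc_subset_Icc_self (uIoc_of_le hy.2 ▸ ht))
  · exact Eventually.of_forall fun t ht => hG.tendsto_Fa hp (hsub ht) (hK t (hsub ht))

lemma eventuallyEq_integral_Finf (hp : 1 ≤ p) (hG : IsGFamily p G)
    (hK : ∀ t ∈ Ioc (0:ℝ) 1, Tendsto (fun a => G a t) atTop (𝓝 (K t)))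
    (hy : y ∈ Ioo (0:ℝ) 1) :
    K =ᶠ[𝓝 y] fun u => ∫ t in u..1, Finf p t (K t) :=
  eventually_of_mem (Ioo_mem_nhds hy.1 hy.2) fun _ hu =>
    hG.eq_integral_Finf hp hK (Ioo_subset_Ioc_self hu)

theorem continuousOn_limit (hp : 1 ≤ p) (hG : IsGFamily p G)
    (hK : ∀ t ∈ Ioc (0:ℝ) 1, Tendsto (fun a => G a t) atTop (𝓝 (K t))) :
    ContinuousOn K (Ioo 0 1) := by
  intro y hy
  have hint := hG.integrableOn_Finf hp hK (y := y / 2) ⟨by linarith [hy.1], by linarith [hy.2]⟩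
  rw [← uIcc_of_le (by linarith [hy.2])] at hint
  have hprim : ContinuousAt (fun u => ∫ t in u..1, Finf p t (K t)) y :=
    (intervalIntegral.continuousOn_primitive_interval_left hint).continuousAt <| by
      rw [uIcc_of_le (by linarith [hy.2])]
      exact Icc_mem_nhds (by linarith [hy.1]) hy.2
  exact (hprim.congr (hG.eventuallyEq_integral_Finf hp hK hy).symm).continuousWithinAt

theorem hasDerivAt_limit (hp : 1 ≤ p) (hG : IsGFamily p G)
    (hK : ∀ t ∈ Ioc (0:ℝ) 1, Tendsto (fun a => G a t) atTop (𝓝 (K t)))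
    (hy : y ∈ Ioo (0:ℝ) 1) :
    HasDerivAt K (-(Finf p y (K y))) y := by
  have hf : ContinuousOn (fun t => Finf p t (K t)) (Ioo 0 1) :=
    continuousOn_Finf_comp hp (hG.continuousOn_limit hp hK) (fun _ ht => ht.1) fun t ht =>
      hG.nonneg_of_tendsto (Ioo_subset_Ioc_self ht) (hK t (Ioo_subset_Ioc_self ht))
  have hint : IntervalIntegrable (fun t => Finf p t (K t)) volume y 1 :=
    (intervalIntegrable_iff_integrableOn_Icc_of_le hy.2.le).2
      (hG.integrableOn_Finf hp hK (Ioo_subset_Ioc_self hy))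
  exact (intervalIntegral.integral_hasDerivAt_left hint
    (hf.stronglyMeasurableAtFilter isOpen_Ioo y hy) (hf.continuousAt (Ioo_mem_nhds hy.1 hy.2)))
    |>.congr_of_eventuallyEq (hG.eventuallyEq_integral_Finf hp hK hy)

end IsGFamily

theorem K_satisfies_limit_ODE (p : ℝ) (hp : 1 < p) (G : ℝ → ℝ → ℝ) (K : ℝ → ℝ)
    (hG : IsGFamily p G)
    (hK : ∀ y ∈ Set.Ioc (0:ℝ) 1,
      Filter.Tendsto (fun a => G a y) Filter.atTop (nhds (K y))) :
    ContinuousOn K (Set.Ioo 0 1) ∧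
    (∀ y ∈ Set.Ioo (0:ℝ) 1, DifferentiableAt ℝ K y) ∧
    (∀ y ∈ Set.Ioo (0:ℝ) 1, HasDerivAt K (-(Finf p y (K y))) y) ∧
    (∀ y ∈ Set.Ioo (0:ℝ) 1,
      -(Finf p y (K y)) =
        -((16*p + 4*(3*p - 2)*(K y) + 2*(p - 1)*(K y)^2) / (y * (4 + (p - 1)*(K y))))) := by
  have hderiv := fun y (hy : y ∈ Ioo (0:ℝ) 1) => hG.hasDerivAt_limit hp.le hK hy
  exact ⟨hG.continuousOn_limit hp.le hK, fun y hy => (hderiv y hy).differentiableAt, hderiv,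
    fun _ _ => rfl⟩
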